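/- Let S, J, J̄ be N×N complex Hermitian positive semidefinite matrices and set Y = I_N + J̄ (which is Hermitian positive definite). Then log(det(I_N + S + J)) − log(det(I_N + J)) ≥ log(det(I_N + S + J)) − Re(tr(Y⁻¹ J)) − log(det Y) + Re(tr(Y⁻¹ J̄)); equivalently log(det(I_N + J)) ≤ log(det Y) + Re(tr(Y⁻¹ (J − J̄))). Moreover equality holds when J = J̄. -/

import Mathlib

/-!
With `Y = I + J̄`, the claim is the tangent-plane inequality for the concave function
`log det` at `Y`: `log det A ≤ log det B + Re tr (B⁻¹ (A - B))` for positive definite `A`, `B`.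
Writing `B⁻¹ = R⋆R`, this becomes `log det M ≤ Re tr M - N` for the positive definite matrix
`M = R A R⋆`, which is `log λ ≤ λ - 1` summed over the eigenvalues of `M`.
-/

open Matrix
open scoped ComplexOrder

namespace Matrix

variable {n 𝕜 : Type*} [Fintype n] [DecidableEq n] [RCLike 𝕜] {A B : Matrix n n 𝕜}

theorem IsHermitian.re_det_eq_prod_eigenvalues (hA : A.IsHermitian) :
    RCLike.re A.det = ∏ i, hA.eigenvalues i := by
  rw [hA.det_eq_prod_eigenvalues, ← RCLike.ofReal_prod, RCLike.ofReal_re]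

theorem IsHermitian.re_trace_eq_sum_eigenvalues (hA : A.IsHermitian) :
    RCLike.re A.trace = ∑ i, hA.eigenvalues i := by
  rw [hA.trace_eq_sum_eigenvalues, ← RCLike.ofReal_sum, RCLike.ofReal_re]

theorem IsHermitian.ofReal_re_det (hA : A.IsHermitian) : (RCLike.re A.det : 𝕜) = A.det := by
  rw [hA.re_det_eq_prod_eigenvalues, hA.det_eq_prod_eigenvalues, RCLike.ofReal_prod]

theorem PosDef.re_det_pos (hA : A.PosDef) : 0 < RCLike.re A.det := by
  rw [hA.isHermitian.re_det_eq_prod_eigenvalues]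
  exact Finset.prod_pos fun i _ ↦ hA.eigenvalues_pos i

theorem PosDef.log_re_det_le_re_trace_sub_card (hA : A.PosDef) :
    Real.log (RCLike.re A.det) ≤ RCLike.re A.trace - Fintype.card n := by
  rw [hA.isHermitian.re_det_eq_prod_eigenvalues, hA.isHermitian.re_trace_eq_sum_eigenvalues,
    Real.log_prod fun i _ ↦ (hA.eigenvalues_pos i).ne']
  calc ∑ i, Real.log (hA.isHermitian.eigenvalues i)
      ≤ ∑ i, (hA.isHermitian.eigenvalues i - 1) :=
        Finset.sum_le_sum fun i _ ↦ Real.log_le_sub_one_of_pos (hA.eigenvalues_pos i)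
    _ = _ := by simp [Finset.sum_sub_distrib]

open scoped MatrixOrder in
theorem PosDef.log_re_det_le (hA : A.PosDef) (hB : B.PosDef) :
    Real.log (RCLike.re A.det) ≤
      Real.log (RCLike.re B.det) + RCLike.re (B⁻¹ * (A - B)).trace := by
  obtain ⟨R, hR⟩ := CStarAlgebra.nonneg_iff_eq_star_mul_self.mp hB.inv.posSemidef.nonneg
  have hRunit : IsUnit R := by
    rw [isUnit_iff_isUnit_det]
    refine isUnit_of_mul_isUnit_right (x := (star R).det) ?_
    rw [← det_mul, ← hR, ← isUnit_iff_isUnit_det]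
    exact hB.inv.isUnit
  have hM : (R * A * star R).PosDef := hRunit.posDef_star_right_conjugate_iff.mpr hA
  have hdet : (R * A * star R).det = A.det * (B.det)⁻¹ := by
    rw [det_mul, det_mul, mul_comm, ← mul_assoc, ← det_mul, ← hR, det_nonsing_inv,
      Ring.inverse_eq_inv', mul_comm]
  have htrace : (R * A * star R).trace = (B⁻¹ * A).trace := by
    rw [trace_mul_cycle, hR]
  have key := hM.log_re_det_le_re_trace_sub_card
  rw [hdet, htrace, ← hA.isHermitian.ofReal_re_det, ← hB.isHermitian.ofReal_re_det,
    ← RCLike.ofReal_inv, ← RCLike.ofReal_mul, RCLike.ofReal_re,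
    Real.log_mul hA.re_det_pos.ne' (inv_ne_zero hB.re_det_pos.ne'), Real.log_inv] at key
  rw [mul_sub, nonsing_inv_mul _ ((isUnit_iff_isUnit_det B).mp hB.isUnit), trace_sub, trace_one,
    map_sub, RCLike.natCast_re]
  linarith

end Matrix

theorem sin_rate_underestimator_general {N : Type*} [Fintype N] [DecidableEq N]
    (S J Jbar : Matrix N N ℂ)
    (hJ : J.PosSemidef) (hJbar : Jbar.PosSemidef)
    (Y : Matrix N N ℂ) (hY : Y = 1 + Jbar) :
    Y.PosDef ∧
    (Real.log ((1 + S + J).det.re) - ((Y⁻¹ * J).trace).re - Real.log (Y.det.re)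
        + ((Y⁻¹ * Jbar).trace).re ≤
      Real.log ((1 + S + J).det.re) - Real.log ((1 + J).det.re)) ∧
    (Real.log ((1 + J).det.re) ≤
      Real.log (Y.det.re) + ((Y⁻¹ * (J - Jbar)).trace).re) ∧
    (J = Jbar →
      Real.log ((1 + S + J).det.re) - ((Y⁻¹ * J).trace).re - Real.log (Y.det.re)
          + ((Y⁻¹ * Jbar).trace).re =
        Real.log ((1 + S + J).det.re) - Real.log ((1 + J).det.re)) := by
  have hYpd : Y.PosDef := hY ▸ PosDef.one.add_posSemidef hJbar
  have tangent : Real.log ((1 + J).det.re) ≤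
      Real.log (Y.det.re) + ((Y⁻¹ * (J - Jbar)).trace).re := by
    have h := (PosDef.one.add_posSemidef hJ).log_re_det_le hYpd
    rwa [show 1 + J - Y = J - Jbar by rw [hY]; abel] at h
  have htrace : ((Y⁻¹ * (J - Jbar)).trace).re =
      ((Y⁻¹ * J).trace).re - ((Y⁻¹ * Jbar).trace).re := by
    rw [mul_sub, trace_sub, Complex.sub_re]
  refine ⟨hYpd, by linarith, tangent, fun hJJ ↦ ?_⟩
  rw [hJJ, hY]
  ring

/-- SIN linearization of the interference term: for Hermitian PSD matrices
`S`, `J`, `J̄` with `Y = I + J̄`, the matrix `Y` is Hermitian positive definite,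
the convexified rate is a lower bound on the true rate
`log det (I + S + J) - log det (I + J)`, equivalently
`log det (I + J) ≤ log det Y + Re (tr (Y⁻¹ (J - J̄)))`,
and equality holds when `J = J̄`. -/
theorem sin_rate_underestimator {N : Type*} [Fintype N] [DecidableEq N]
    (S J Jbar : Matrix N N ℂ)
    (hS : S.PosSemidef) (hJ : J.PosSemidef) (hJbar : Jbar.PosSemidef)
    (Y : Matrix N N ℂ) (hY : Y = 1 + Jbar) :
    Y.PosDef ∧
    (Real.log ((1 + S + J).det.re) - ((Y⁻¹ * J).trace).re - Real.log (Y.det.re)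
        + ((Y⁻¹ * Jbar).trace).re ≤
      Real.log ((1 + S + J).det.re) - Real.log ((1 + J).det.re)) ∧
    (Real.log ((1 + J).det.re) ≤
      Real.log (Y.det.re) + ((Y⁻¹ * (J - Jbar)).trace).re) ∧
    (J = Jbar →
      Real.log ((1 + S + J).det.re) - ((Y⁻¹ * J).trace).re - Real.log (Y.det.re)
          + ((Y⁻¹ * Jbar).trace).re =
        Real.log ((1 + S + J).det.re) - Real.log ((1 + J).det.re)) :=
  sin_rate_underestimator_general S J Jbar hJ hJbar Y hY
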